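/- Let m ≥ 1 be an integer, 0 ≤ q < 1 a real number, and D ∈ ℕ. Then Σ_{K ∈ ℕᵐ, |K| ≥ D} q^{|K|} ≤ (D+1)^{m−1} · q^D / (1 − q)^m (in particular the family is summable). -/

import Mathlib

/-!
Every `K ∈ ℕᵐ` with `|K| ≥ D` splits as `A + B` with `|A| = D`, so the tail sum is at most
`Σ_{|A| = D} Σ_B q^{D + |B|} = #{A : |A| = D} · q^D / (1 - q)^m`. An `A` with `|A| = D` is
determined by its first `m - 1` entries, each at most `D`, whence `#{A : |A| = D} ≤ (D + 1)^(m - 1)`.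
-/

open Finset Function

theorem hasSum_pow_sum_fin {q : ℝ} (hq0 : 0 ≤ q) (hq1 : q < 1) (m : ℕ) :
    HasSum (fun K : Fin m → ℕ => q ^ ∑ i, K i) ((1 - q)⁻¹ ^ m) := by
  induction m with
  | zero => simp
  | succ m ih =>
    have hgeom : HasSum (fun k : ℕ => q ^ k) (1 - q)⁻¹ := hasSum_geometric_of_lt_one hq0 hq1
    have hprod := hgeom.mul ih <| Summable.mul_of_nonneg (f := fun k : ℕ => q ^ k)
      (g := fun K : Fin m → ℕ => q ^ ∑ i, K i) hgeom.summable ih.summable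
      (fun _ => pow_nonneg hq0 _) (fun _ => pow_nonneg hq0 _)
    have hcons : (fun K : Fin (m + 1) → ℕ => q ^ ∑ i, K i) ∘ Fin.consEquiv (fun _ => ℕ) =
        fun p => q ^ p.1 * q ^ ∑ i, p.2 i := by
      funext p
      simp [Fin.consEquiv, Fin.sum_cons, pow_add]
    rw [pow_succ', ← (Fin.consEquiv fun _ => ℕ).hasSum_iff, hcons]
    exact hprod

theorem exists_le_sum_eq_of_le_sum {ι : Type*} [Fintype ι] [DecidableEq ι] {K : ι → ℕ} :
    ∀ {D : ℕ}, D ≤ ∑ i, K i → ∃ A ≤ K, ∑ i, A i = D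
  | 0, _ => ⟨0, fun _ => Nat.zero_le _, by simp⟩
  | D + 1, hD => by
    obtain ⟨A, hAK, hA⟩ := exists_le_sum_eq_of_le_sum (Nat.le_of_succ_le hD)
    obtain ⟨i, -, hi⟩ : ∃ i ∈ univ, A i < K i := exists_lt_of_sum_lt (by omega)
    refine ⟨A + Pi.single i 1, fun j => ?_, by simp [sum_add_distrib, hA]⟩
    rcases eq_or_ne j i with rfl | hj
    · simpa using hi
    · simpa [hj] using hAK j

theorem Summable.tsum_le_tsum_comp_of_surjective {α β : Type*} {f : α → ℝ} (hf : 0 ≤ f)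
    {φ : β → α} (hφ : Surjective φ) (h : Summable (f ∘ φ)) :
    Summable f ∧ ∑' a, f a ≤ ∑' b, f (φ b) := by
  have hfψ : f ∘ φ ∘ surjInv hφ = f := funext fun a => by simp
  have hs : Summable f := hfψ ▸ h.comp_injective (injective_surjInv hφ)
  refine ⟨hs, ?_⟩
  exact hs.tsum_le_tsum_of_inj (surjInv hφ) (injective_surjInv hφ) (fun _ _ => hf _)
    (fun a => by simp [rightInverse_surjInv hφ a]) h

theorem card_antidiagonalTuple_succ_le (n D : ℕ) :
    #(Nat.antidiagonalTuple (n + 1) D) ≤ (D + 1) ^ n := by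
  calc #(Nat.antidiagonalTuple (n + 1) D)
      ≤ #(Fintype.piFinset fun _ : Fin n => range (D + 1)) := by
        refine card_le_card_of_injOn Fin.init (fun A hA => ?_) (fun A hA B hB hAB => ?_)
        · rw [mem_coe, Nat.mem_antidiagonalTuple] at hA
          rw [mem_coe, Fintype.mem_piFinset]
          intro i
          have := single_le_sum (f := A) (fun _ _ => Nat.zero_le _) (mem_univ i.castSucc)
          simp [Fin.init]; omega
        · simp only [Nat.mem_antidiagonalTuple, mem_coe] at hA hB
          rw [Fin.sum_univ_castSucc] at hA hB
          have hinit : ∀ i : Fin n, A i.castSucc = B i.castSucc := fun i => congrFun hAB i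
          have hlast : A (Fin.last n) = B (Fin.last n) := by
            simp only [hinit] at hA; omega
          ext i
          induction i using Fin.lastCases with
          | last => exact hlast
          | cast i => exact hinit i
    _ = (D + 1) ^ n := by simp

theorem summable_pow_sum_tail_and_tsum_le {q : ℝ} (hq0 : 0 ≤ q) (hq1 : q < 1) (m D : ℕ) :
    Summable (fun K : {K : Fin m → ℕ // D ≤ ∑ i, K i} => q ^ ∑ i, K.1 i) ∧
      ∑' K : {K : Fin m → ℕ // D ≤ ∑ i, K i}, q ^ ∑ i, K.1 i ≤
        #(Nat.antidiagonalTuple m D) * q ^ D / (1 - q) ^ m := by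
  let φ : Nat.antidiagonalTuple m D × (Fin m → ℕ) → {K : Fin m → ℕ // D ≤ ∑ i, K i} :=
    fun p => ⟨p.1 + p.2, by
      have := Nat.mem_antidiagonalTuple.1 p.1.2
      simp only [Pi.add_apply, sum_add_distrib]; omega⟩
  have hφ : Surjective φ := fun K => by
    obtain ⟨A, hAK, hA⟩ := exists_le_sum_eq_of_le_sum K.2
    exact ⟨(⟨A, Nat.mem_antidiagonalTuple.2 hA⟩, K.1 - A), Subtype.ext (add_tsub_cancel_of_le hAK)⟩
  have hfφ : (fun K : {K : Fin m → ℕ // D ≤ ∑ i, K i} => q ^ ∑ i, K.1 i) ∘ φ =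
      fun p => q ^ D * q ^ ∑ i, p.2 i := by
    funext ⟨⟨A, hA⟩, B⟩
    simp [φ, sum_add_distrib, pow_add, Nat.mem_antidiagonalTuple.1 hA]
  have hsum : HasSum (fun p : Nat.antidiagonalTuple m D × (Fin m → ℕ) => q ^ D * q ^ ∑ i, p.2 i)
      (#(Nat.antidiagonalTuple m D) * q ^ D / (1 - q) ^ m) := by
    have hgeom := hasSum_pow_sum_fin hq0 hq1 m
    have := (hasSum_fintype fun _ : Nat.antidiagonalTuple m D => q ^ D).mul hgeom <|
      Summable.mul_of_nonneg (f := fun _ : Nat.antidiagonalTuple m D => q ^ D)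
        (g := fun K : Fin m → ℕ => q ^ ∑ i, K i) .of_finite hgeom.summable
        (fun _ => pow_nonneg hq0 _) (fun _ => pow_nonneg hq0 _)
    simpa [div_eq_mul_inv, mul_assoc] using this
  obtain ⟨hs, hle⟩ := Summable.tsum_le_tsum_comp_of_surjective (fun _ => pow_nonneg hq0 _) hφ
    (hfφ ▸ hsum.summable)
  exact ⟨hs, hle.trans_eq (hsum.tsum_eq ▸ congrArg tsum hfφ)⟩

/-- Geometric tail estimate over multi-indices (core of Lemma 4.2 of the paper):
for `0 ≤ q < 1` and `D ∈ ℕ`, the family `(q^{|K|})_{K ∈ ℕᵐ, |K| ≥ D}` is summable and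
`Σ_{|K| ≥ D} q^{|K|} ≤ (D+1)^{m−1} q^D / (1 − q)^m`. -/
theorem stmt_11 (m : ℕ) (hm : 1 ≤ m) (q : ℝ) (hq0 : 0 ≤ q) (hq1 : q < 1) (D : ℕ) :
    Summable (fun K : {K : Fin m → ℕ // D ≤ ∑ i, K i} => q ^ (∑ i, K.1 i)) ∧
      ∑' K : {K : Fin m → ℕ // D ≤ ∑ i, K i}, q ^ (∑ i, K.1 i) ≤
        ((D : ℝ) + 1) ^ (m - 1) * q ^ D / (1 - q) ^ m := by
  obtain ⟨n, rfl⟩ : ∃ n, m = n + 1 := ⟨m - 1, by omega⟩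
  obtain ⟨hs, hle⟩ := summable_pow_sum_tail_and_tsum_le hq0 hq1 (n + 1) D
  refine ⟨hs, hle.trans ?_⟩
  have hcard : (#(Nat.antidiagonalTuple (n + 1) D) : ℝ) ≤ ((D : ℝ) + 1) ^ n :=
    mod_cast card_antidiagonalTuple_succ_le n D
  rw [Nat.add_sub_cancel]
  gcongr
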